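/- Let k ∈ ℕ, r_1, …, r_k ≥ 0, and let (β_m)_{m∈ℕ} be i.i.d. standard normal random variables. Then (1/M) Var( Σ_{m=1}^{M−k+1} Π_{j=1}^{k} |β_{m+j−1}|^{r_j} ) → A(r_1, …, r_k) as M → ∞, where A(r_1, …, r_k) = Π_{l=1}^{k} μ_{2r_l} − (2k − 1) Π_{l=1}^{k} μ_{r_l}² + 2 Σ_{j=1}^{k−1} ( Π_{l=1}^{j} μ_{r_l} · Π_{l=k−j+1}^{k} μ_{r_l} · Π_{l=1}^{k−j} μ_{r_l + r_{l+j}} ). -/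

import Mathlib

/-!
The summands `X_m = ∏_{j<k} |β_{m+j}|^{r_j}` form a stationary sequence in which `X_m` and `X_n`
are independent once `|m - n| ≥ k`. By independence, `E[X_m X_{m+d}]` is a product of absolute
Gaussian moments, one per index of `[m, m + k + d)`, the exponents of the two windows adding up
where they overlap. Hence `cov(X_m, X_n) = c(|m - n|)` with `c(d) = 0` for `d ≥ k`, and for
`N ≥ k` the variance of `∑_{m=1}^N X_m` is affine in `N` with slope `c(0) + 2 ∑_{0<d<k} c(d)`,
which is exactly `A(r_1, …, r_k)`.
-/

open MeasureTheory ProbabilityTheory Filter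

/-- `μ_r = E|Z|^r` for a standard normal `Z`. -/
noncomputable def stdAbsMoment (r : ℝ) : ℝ := ∫ x, |x| ^ r ∂(gaussianReal 0 1)

/-- The constant `A(r_1, …, r_k)` from Podolskij–Vetter (2009), with the powers
indexed as `r 0, …, r (k-1)` (so `r_j` of the paper is `r (j-1)` here):
`A = ∏ μ_{2r_l} - (2k-1) ∏ μ_{r_l}² +
  2 ∑_{j=1}^{k-1} (∏_{l=1}^{j} μ_{r_l}) (∏_{l=k-j+1}^{k} μ_{r_l}) (∏_{l=1}^{k-j} μ_{r_l + r_{l+j}})`. -/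
noncomputable def Aconst (k : ℕ) (r : ℕ → ℝ) : ℝ :=
  (∏ l ∈ Finset.range k, stdAbsMoment (2 * r l))
    - (2 * k - 1) * ∏ l ∈ Finset.range k, (stdAbsMoment (r l)) ^ 2
    + 2 * ∑ j ∈ Finset.Icc 1 (k - 1),
        (∏ l ∈ Finset.range j, stdAbsMoment (r l)) *
        (∏ l ∈ Finset.Ico (k - j) k, stdAbsMoment (r l)) *
        (∏ l ∈ Finset.range (k - j), stdAbsMoment (r l + r (l + j)))

open Finset

namespace ProbabilityTheory

variable {Ω ι : Type*} {mΩ : MeasurableSpace Ω} {μ : Measure Ω} {X : ι → Ω → ℝ}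

lemma iIndepFun.integral_fun_finset_prod (hX : iIndepFun X μ) (hm : ∀ i, AEMeasurable (X i) μ)
    (s : Finset ι) : ∫ ω, ∏ i ∈ s, X i ω ∂μ = ∏ i ∈ s, ∫ ω, X i ω ∂μ := by
  classical
  induction s using Finset.induction_on with
  | empty => simp [hX.isProbabilityMeasure]
  | insert a s ha ih =>
    have hind := (hX.indepFun_finsetProd_of_notMem₀ hm ha).symm
    simp only [prod_insert ha, ← ih]
    simpa [Finset.prod_fn] using hind.integral_fun_mul_eq_mul_integral (hm a).aestronglyMeasurable
      (Finset.aemeasurable_prod s fun i _ => hm i).aestronglyMeasurable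

lemma iIndepFun.integrable_fun_finset_prod (hX : iIndepFun X μ) (hm : ∀ i, AEMeasurable (X i) μ)
    {s : Finset ι} (hi : ∀ i ∈ s, Integrable (X i) μ) :
    Integrable (fun ω => ∏ i ∈ s, X i ω) μ := by
  classical
  have := hX.isProbabilityMeasure
  induction s using Finset.induction_on with
  | empty => simp
  | insert a s ha ih =>
    have hind := (hX.indepFun_finsetProd_of_notMem₀ hm ha).symm
    simp only [prod_insert ha]
    simpa [Pi.mul_def, Finset.prod_fn] using hind.integrable_mul (hi a (mem_insert_self a s))
      (by simpa [Finset.prod_fn] using ih fun i hi' => hi i (mem_insert_of_mem hi'))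

end ProbabilityTheory

lemma integrable_abs_rpow_gaussianReal (m : ℝ) (v : NNReal) {t : ℝ} (ht : 0 ≤ t) :
    Integrable (fun x : ℝ => |x| ^ t) (gaussianReal m v) := by
  rcases ht.eq_or_lt with rfl | ht
  · simp
  have := (memLp_id_gaussianReal (μ := m) (v := v) t.toNNReal).integrable_norm_rpow
    (by simpa using ht) (by simp)
  simpa [ht.le] using this

lemma stdAbsMoment_zero : stdAbsMoment 0 = 1 := by
  simp [stdAbsMoment]

section GaussianLaw

variable {Ω : Type*} {mΩ : MeasurableSpace Ω} {P : Measure Ω} {X : Ω → ℝ}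

lemma aemeasurable_of_map_eq_gaussianReal (hX : P.map X = gaussianReal 0 1) : AEMeasurable X P :=
  aemeasurable_of_map_neZero (by rw [hX]; infer_instance)

lemma integral_abs_rpow_of_map_eq_gaussianReal (hX : P.map X = gaussianReal 0 1) (t : ℝ) :
    ∫ ω, |X ω| ^ t ∂P = stdAbsMoment t := by
  rw [stdAbsMoment, ← hX, integral_map (aemeasurable_of_map_eq_gaussianReal hX)
    (measurable_abs.pow_const t).aestronglyMeasurable]

lemma integrable_abs_rpow_of_map_eq_gaussianReal (hX : P.map X = gaussianReal 0 1) {t : ℝ}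
    (ht : 0 ≤ t) : Integrable (fun ω => |X ω| ^ t) P := by
  have := integrable_abs_rpow_gaussianReal 0 1 ht
  rw [← hX] at this
  exact this.comp_aemeasurable (aemeasurable_of_map_eq_gaussianReal hX)

end GaussianLaw

section IIDGaussian

variable {Ω ι : Type*} {mΩ : MeasurableSpace Ω} {P : Measure Ω} {β : ι → Ω → ℝ}

lemma integral_prod_abs_rpow_of_iIndepFun_gaussianReal (hβ : iIndepFun β P)
    (hg : ∀ i, P.map (β i) = gaussianReal 0 1) (s : Finset ι) (p : ι → ℝ) :
    ∫ ω, ∏ i ∈ s, |β i ω| ^ p i ∂P = ∏ i ∈ s, stdAbsMoment (p i) :=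
  ((hβ.comp (fun i x => |x| ^ p i) fun _ => measurable_abs.pow_const _).integral_fun_finset_prod
    (fun i => (aemeasurable_of_map_eq_gaussianReal (hg i)).abs.pow_const _) s).trans
    (prod_congr rfl fun i _ => integral_abs_rpow_of_map_eq_gaussianReal (hg i) (p i))

lemma integrable_prod_abs_rpow_of_iIndepFun_gaussianReal (hβ : iIndepFun β P)
    (hg : ∀ i, P.map (β i) = gaussianReal 0 1) {s : Finset ι} {p : ι → ℝ}
    (hp : ∀ i ∈ s, 0 ≤ p i) : Integrable (fun ω => ∏ i ∈ s, |β i ω| ^ p i) P :=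
  (hβ.comp (fun i x => |x| ^ p i) fun _ => measurable_abs.pow_const _).integrable_fun_finset_prod
    (fun i => (aemeasurable_of_map_eq_gaussianReal (hg i)).abs.pow_const _)
    fun i hi => integrable_abs_rpow_of_map_eq_gaussianReal (hg i) (hp i hi)

end IIDGaussian

section Overlap

variable {k : ℕ} {r : ℕ → ℝ} {d j : ℕ}

/-- The exponent of `|β_j|` in the multipower summand `∏_{i<k} |β_{d+i}|^{r_i}`. -/
noncomputable def windowExponent (k : ℕ) (r : ℕ → ℝ) (d j : ℕ) : ℝ :=
  if d ≤ j ∧ j < d + k then r (j - d) else 0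

/-- `E[X_m X_{m+d}]` for the multipower summands `X_m`. -/
noncomputable def lagMoment (k : ℕ) (r : ℕ → ℝ) (d : ℕ) : ℝ :=
  ∏ j ∈ range (k + d), stdAbsMoment (windowExponent k r 0 j + windowExponent k r d j)

lemma windowExponent_eq (h₁ : d ≤ j) (h₂ : j < d + k) : windowExponent k r d j = r (j - d) :=
  if_pos ⟨h₁, h₂⟩

lemma windowExponent_eq_zero (h : j < d ∨ d + k ≤ j) : windowExponent k r d j = 0 :=
  if_neg (by omega)

lemma windowExponent_nonneg (hr : ∀ j < k, 0 ≤ r j) : 0 ≤ windowExponent k r d j := by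
  unfold windowExponent
  split_ifs with h
  exacts [hr _ (by omega), le_rfl]

lemma prod_range_windowExponent {M : Type*} [CommMonoid M] (g : ℕ → ℝ → M) (hg : ∀ j, g j 0 = 1)
    {n : ℕ} (hn : d + k ≤ n) :
    ∏ j ∈ range n, g j (windowExponent k r d j) = ∏ j ∈ range k, g (d + j) (r j) := by
  obtain ⟨e, rfl⟩ := Nat.exists_eq_add_of_le hn
  rw [prod_range_add, prod_range_add]
  have hbefore : ∏ j ∈ range d, g j (windowExponent k r d j) = 1 :=
    prod_eq_one fun j hj => by rw [windowExponent_eq_zero (by simp_all), hg]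
  have hafter : ∏ j ∈ range e, g (d + k + j) (windowExponent k r d (d + k + j)) = 1 :=
    prod_eq_one fun j hj => by rw [windowExponent_eq_zero (by omega), hg]
  rw [hbefore, hafter, one_mul, mul_one]
  exact prod_congr rfl fun j hj => by
    rw [windowExponent_eq (by omega) (by simp_all), Nat.add_sub_cancel_left]

lemma lagMoment_of_le (hd : d ≤ k) :
    lagMoment k r d = (∏ l ∈ range d, stdAbsMoment (r l)) *
      (∏ l ∈ Ico (k - d) k, stdAbsMoment (r l)) *
      ∏ l ∈ range (k - d), stdAbsMoment (r l + r (l + d)) := by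
  rw [lagMoment, show k + d = d + ((k - d) + d) by omega, prod_range_add, prod_range_add,
    prod_Ico_eq_prod_range, show k - (k - d) = d by omega]
  have hhead : ∀ j ∈ range d, stdAbsMoment (windowExponent k r 0 j + windowExponent k r d j)
      = stdAbsMoment (r j) := fun j hj => by
    rw [windowExponent_eq (by omega) (by simp at hj; omega),
      windowExponent_eq_zero (by simp_all), add_zero, Nat.sub_zero]
  have hoverlap : ∀ j ∈ range (k - d), stdAbsMoment
      (windowExponent k r 0 (d + j) + windowExponent k r d (d + j))
      = stdAbsMoment (r j + r (j + d)) := fun j hj => by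
    rw [windowExponent_eq (by omega) (by simp at hj; omega),
      windowExponent_eq (by omega) (by simp at hj; omega), add_comm]
    congr 3 <;> omega
  have htail : ∀ j ∈ range d, stdAbsMoment
      (windowExponent k r 0 (d + (k - d + j)) + windowExponent k r d (d + (k - d + j)))
      = stdAbsMoment (r (k - d + j)) := fun j hj => by
    rw [windowExponent_eq_zero (by omega), windowExponent_eq (by omega)
      (by simp at hj; omega), zero_add]
    congr 2; omega
  rw [prod_congr rfl hhead, prod_congr rfl hoverlap, prod_congr rfl htail]
  ring

lemma lagMoment_of_ge (hd : k ≤ d) :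
    lagMoment k r d = (∏ l ∈ range k, stdAbsMoment (r l)) ^ 2 := by
  have hdisjoint : ∀ j, stdAbsMoment (windowExponent k r 0 j + windowExponent k r d j)
      = stdAbsMoment (windowExponent k r 0 j) * stdAbsMoment (windowExponent k r d j) := by
    intro j
    rcases lt_or_ge j k with hj | hj
    · rw [windowExponent_eq_zero (d := d) (by omega), add_zero, stdAbsMoment_zero, mul_one]
    · rw [windowExponent_eq_zero (d := 0) (by omega), zero_add, stdAbsMoment_zero, one_mul]
  rw [lagMoment, prod_congr rfl fun j _ => hdisjoint j, prod_mul_distrib,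
    prod_range_windowExponent (fun _ => stdAbsMoment) (fun _ => stdAbsMoment_zero) (by omega),
    prod_range_windowExponent (fun _ => stdAbsMoment) (fun _ => stdAbsMoment_zero) (by omega), sq]

noncomputable def lagCov (k : ℕ) (r : ℕ → ℝ) (d : ℕ) : ℝ :=
  lagMoment k r d - (∏ l ∈ range k, stdAbsMoment (r l)) ^ 2

lemma lagCov_of_ge (hd : k ≤ d) : lagCov k r d = 0 := by
  rw [lagCov, lagMoment_of_ge hd, sub_self]

lemma Aconst_eq_lagCov (hk : 1 ≤ k) :
    Aconst k r = lagCov k r 0 + 2 * ∑ d ∈ Icc 1 (k - 1), lagCov k r d := by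
  have hzero : lagMoment k r 0 = ∏ l ∈ range k, stdAbsMoment (2 * r l) := by
    simp [lagMoment_of_le, two_mul]
  have hsum : ∑ d ∈ Icc 1 (k - 1), lagMoment k r d = ∑ d ∈ Icc 1 (k - 1),
      (∏ l ∈ range d, stdAbsMoment (r l)) * (∏ l ∈ Ico (k - d) k, stdAbsMoment (r l)) *
        ∏ l ∈ range (k - d), stdAbsMoment (r l + r (l + d)) :=
    sum_congr rfl fun d hd => lagMoment_of_le (by simp at hd; omega)
  have hcard : ((Icc 1 (k - 1)).card : ℝ) = k - 1 := by
    rw [Nat.card_Icc, Nat.add_sub_cancel, Nat.cast_sub hk, Nat.cast_one]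
  simp only [lagCov, sum_sub_distrib, sum_const, nsmul_eq_mul, hcard, hzero, hsum, Aconst,
    prod_pow]
  ring

end Overlap

section Multipower

variable {Ω : Type*} {mΩ : MeasurableSpace Ω} {P : Measure Ω} {β : ℕ → Ω → ℝ} {k : ℕ}
  {r : ℕ → ℝ}

noncomputable def multipower (β : ℕ → Ω → ℝ) (k : ℕ) (r : ℕ → ℝ) (m : ℕ) (ω : Ω) : ℝ :=
  ∏ j ∈ range k, |β (m + j) ω| ^ r j

lemma multipower_mul_multipower_add (hr : ∀ j < k, 0 ≤ r j) (m d : ℕ) (ω : Ω) :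
    multipower β k r m ω * multipower β k r (m + d) ω =
      ∏ j ∈ range (k + d), |β (m + j) ω| ^ (windowExponent k r 0 j + windowExponent k r d j) := by
  simp only [Real.rpow_add_of_nonneg (abs_nonneg _) (windowExponent_nonneg hr)
    (windowExponent_nonneg hr), prod_mul_distrib]
  rw [prod_range_windowExponent (fun j t => |β (m + j) ω| ^ t) (fun _ => Real.rpow_zero _)
      (by omega),
    prod_range_windowExponent (fun j t => |β (m + j) ω| ^ t) (fun _ => Real.rpow_zero _)
      (by omega)]
  simp [multipower, add_assoc]

variable (hβ : iIndepFun β P) (hg : ∀ i, P.map (β i) = gaussianReal 0 1)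
include hβ hg

lemma integral_multipower (m : ℕ) :
    ∫ ω, multipower β k r m ω ∂P = ∏ j ∈ range k, stdAbsMoment (r j) :=
  integral_prod_abs_rpow_of_iIndepFun_gaussianReal (hβ.precomp (add_right_injective m))
    (fun j => hg (m + j)) (range k) r

lemma integral_multipower_mul_multipower_add (hr : ∀ j < k, 0 ≤ r j) (m d : ℕ) :
    ∫ ω, multipower β k r m ω * multipower β k r (m + d) ω ∂P = lagMoment k r d := by
  simp_rw [multipower_mul_multipower_add hr]
  exact integral_prod_abs_rpow_of_iIndepFun_gaussianReal (hβ.precomp (add_right_injective m))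
    (fun j => hg (m + j)) _ _

lemma integrable_multipower_mul_multipower_add (hr : ∀ j < k, 0 ≤ r j) (m d : ℕ) :
    Integrable (fun ω => multipower β k r m ω * multipower β k r (m + d) ω) P := by
  simp_rw [multipower_mul_multipower_add hr]
  exact integrable_prod_abs_rpow_of_iIndepFun_gaussianReal (hβ.precomp (add_right_injective m))
    (fun j => hg (m + j))
    fun _ _ => add_nonneg (windowExponent_nonneg hr) (windowExponent_nonneg hr)

lemma memLp_multipower (hr : ∀ j < k, 0 ≤ r j) (m : ℕ) : MemLp (multipower β k r m) 2 P := by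
  have hmeas : AEStronglyMeasurable (multipower β k r m) P :=
    Finset.aestronglyMeasurable_fun_prod _ fun j _ =>
      ((aemeasurable_of_map_eq_gaussianReal (hg (m + j))).abs.pow_const _).aestronglyMeasurable
  refine (memLp_two_iff_integrable_sq hmeas).2 ?_
  simpa [sq] using integrable_multipower_mul_multipower_add hβ hg hr m 0

lemma covariance_multipower_add (hr : ∀ j < k, 0 ≤ r j) (m d : ℕ) :
    cov[multipower β k r m, multipower β k r (m + d); P] = lagCov k r d := by
  have := hβ.isProbabilityMeasure
  rw [covariance_eq_sub (memLp_multipower hβ hg hr m) (memLp_multipower hβ hg hr (m + d)),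
    integral_multipower hβ hg, integral_multipower hβ hg, lagCov, sq,
    ← integral_multipower_mul_multipower_add hβ hg hr m d]
  rfl

lemma covariance_multipower (hr : ∀ j < k, 0 ≤ r j) (m n : ℕ) :
    cov[multipower β k r m, multipower β k r n; P] = lagCov k r (Nat.dist m n) := by
  rcases le_total m n with h | h
  · obtain ⟨d, rfl⟩ := Nat.exists_eq_add_of_le h
    rw [covariance_multipower_add hβ hg hr, Nat.dist_eq_sub_of_le h, Nat.add_sub_cancel_left]
  · obtain ⟨d, rfl⟩ := Nat.exists_eq_add_of_le h
    rw [covariance_comm, covariance_multipower_add hβ hg hr, Nat.dist_eq_sub_of_le_right h,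
      Nat.add_sub_cancel_left]

lemma variance_sum_multipower (hr : ∀ j < k, 0 ≤ r j) (s : Finset ℕ) :
    Var[fun ω => ∑ m ∈ s, multipower β k r m ω; P] =
      ∑ m ∈ s, ∑ n ∈ s, lagCov k r (Nat.dist m n) := by
  have := hβ.isProbabilityMeasure
  rw [variance_fun_sum' fun m _ => memLp_multipower hβ hg hr m]
  simp_rw [covariance_multipower hβ hg hr]

end Multipower

section DistanceSums

variable {k N : ℕ} {h : ℕ → ℝ}

lemma sum_Icc_dist_eq_sum_Icc :
    ∑ n ∈ Icc 1 N, h (Nat.dist (N + 1) n) = ∑ d ∈ Icc 1 N, h d :=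
  sum_nbij' (fun n => N + 1 - n) (fun d => N + 1 - d) (by simp; omega) (by simp; omega)
    (by simp; omega) (by simp; omega)
    fun n hn => by rw [Nat.dist_eq_sub_of_le_right (by simp at hn; omega)]

lemma sum_sum_dist_Icc_add_one (hh : ∀ d, k ≤ d → h d = 0) (hN : k ≤ N) :
    ∑ m ∈ Icc 1 (N + 1), ∑ n ∈ Icc 1 (N + 1), h (Nat.dist m n)
      = ∑ m ∈ Icc 1 N, ∑ n ∈ Icc 1 N, h (Nat.dist m n)
        + (h 0 + 2 * ∑ d ∈ Icc 1 (k - 1), h d) := by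
  have htrunc : ∑ d ∈ Icc 1 N, h d = ∑ d ∈ Icc 1 (k - 1), h d :=
    (sum_subset (Icc_subset_Icc_right (by omega)) fun d hd hd' => hh d (by simp_all; omega)).symm
  rw [← insert_Icc_right_eq_Icc_add_one (by omega)]
  have hnotMem : N + 1 ∉ Icc 1 N := by simp
  simp only [sum_insert hnotMem, sum_add_distrib, Nat.dist_self]
  simp_rw [Nat.dist_comm _ (N + 1)]
  rw [sum_Icc_dist_eq_sum_Icc, htrunc]
  ring

lemma sum_sum_dist_Icc (hh : ∀ d, k ≤ d → h d = 0) (hN : k ≤ N) :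
    ∑ m ∈ Icc 1 N, ∑ n ∈ Icc 1 N, h (Nat.dist m n)
      = ∑ m ∈ Icc 1 k, ∑ n ∈ Icc 1 k, h (Nat.dist m n)
        + ((N : ℝ) - k) * (h 0 + 2 * ∑ d ∈ Icc 1 (k - 1), h d) := by
  induction N, hN using Nat.le_induction with
  | base => simp
  | succ N hN ih =>
    rw [sum_sum_dist_Icc_add_one hh hN, ih]
    push_cast
    ring

end DistanceSums

lemma tendsto_inv_mul_add_sub_mul (a b c : ℝ) :
    Tendsto (fun M : ℕ => (M : ℝ)⁻¹ * (a + (M - b) * c)) atTop (nhds c) := by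
  have h := tendsto_const_nhds (x := c).add (tendsto_inv_atTop_nhds_zero_nat.const_mul (a - b * c))
  rw [mul_zero, add_zero] at h
  refine h.congr' ?_
  filter_upwards [eventually_ne_atTop 0] with M hM
  field_simp
  ring

theorem multipower_sum_variance_tendsto_general
    {Ω : Type*} [MeasureSpace Ω]
    (k : ℕ) (hk : 1 ≤ k) (r : ℕ → ℝ) (hr : ∀ j, j < k → 0 ≤ r j)
    (β : ℕ → Ω → ℝ)
    (hβindep : iIndepFun β ℙ)
    (hβgauss : ∀ m, Measure.map (β m) ℙ = gaussianReal 0 1) :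
    Tendsto (fun M : ℕ =>
        (M : ℝ)⁻¹ * variance (fun ω =>
          ∑ m ∈ Finset.Icc 1 (M - k + 1),
            ∏ j ∈ Finset.range k, |β (m + j) ω| ^ (r j)) ℙ)
      atTop (nhds (Aconst k r)) := by
  refine (tendsto_inv_mul_add_sub_mul (∑ m ∈ Icc 1 k, ∑ n ∈ Icc 1 k, lagCov k r (Nat.dist m n))
    (2 * k - 1) (Aconst k r)).congr' ?_
  filter_upwards [eventually_ge_atTop (2 * k)] with M hM
  change _ = (M : ℝ)⁻¹ * Var[fun ω => ∑ m ∈ Icc 1 (M - k + 1), multipower β k r m ω; ℙ]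
  rw [variance_sum_multipower hβindep hβgauss hr,
    sum_sum_dist_Icc (N := M - k + 1) (fun d => lagCov_of_ge) (by omega), Aconst_eq_lagCov hk]
  push_cast [show k ≤ M by omega]
  ring

/-- For i.i.d. standard normal `β`, the scaled variance of the multipower sum
converges: `M⁻¹ Var(∑_{m=1}^{M-k+1} ∏_{j<k} |β_{m+j}|^{r j}) → A(r_1, …, r_k)`. -/
theorem multipower_sum_variance_tendsto
    {Ω : Type*} [MeasureSpace Ω] [IsProbabilityMeasure (ℙ : Measure Ω)]
    (k : ℕ) (hk : 1 ≤ k) (r : ℕ → ℝ) (hr : ∀ j, j < k → 0 ≤ r j)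
    (β : ℕ → Ω → ℝ) (hβmeas : ∀ m, Measurable (β m))
    (hβindep : iIndepFun β ℙ)
    (hβgauss : ∀ m, Measure.map (β m) ℙ = gaussianReal 0 1) :
    Tendsto (fun M : ℕ =>
        (M : ℝ)⁻¹ * variance (fun ω =>
          ∑ m ∈ Finset.Icc 1 (M - k + 1),
            ∏ j ∈ Finset.range k, |β (m + j) ω| ^ (r j)) ℙ)
      atTop (nhds (Aconst k r)) :=
  multipower_sum_variance_tendsto_general k hk r hr β hβindep hβgauss
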